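/- There is a well-defined monoid homomorphism h from the commutative monoid M = ⟨σ, τ | στ = σ³⟩ to (ℕ, +) with h(σ) = 1 and h(τ) = 2, and for every n ≥ 1 the fiber h⁻¹(n) has exactly two elements if n is even (namely σⁿ and τ^{n/2}) and exactly one element if n is odd (namely σⁿ). -/

import Mathlib

/-- Relations presenting the commutative monoid `⟨σ, τ | στ = σ³⟩` (as a quotient of the
free monoid on `Bool`, where `false` stands for `σ` and `true` for `τ`): the commutativity
relation `στ = τσ` together with `στ = σ³`. -/
def surfRels : FreeMonoid Bool → FreeMonoid Bool → Prop := fun x y =>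
  (x = FreeMonoid.of false * FreeMonoid.of true ∧
     y = FreeMonoid.of true * FreeMonoid.of false) ∨
  (x = FreeMonoid.of false * FreeMonoid.of true ∧
     y = FreeMonoid.of false * FreeMonoid.of false * FreeMonoid.of false)

/-- The commutative monoid `M = ⟨σ, τ | στ = σ³⟩`. -/
def SurfMonoid := PresentedMonoid surfRels

instance : Monoid SurfMonoid := by unfold SurfMonoid; infer_instance

def SurfMonoid.σ : SurfMonoid := PresentedMonoid.of surfRels false
def SurfMonoid.τ : SurfMonoid := PresentedMonoid.of surfRels true

/-!
Commutativity and `στ = σ³` bring every element to the form `σ ^ a * τ ^ b`, and for `a ≠ 0`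
this collapses to `σ ^ (a + 2 * b)`. Hence every element is either a pure `σ`-power, determined
by its genus, or a pure `τ`-power of half its genus. The two kinds never meet: the homomorphism
to `(ℕ, *)` with `σ ↦ 0`, `τ ↦ 1` detects whether a crosscap occurs.
-/

namespace SurfMonoid

lemma commute_sigma_tau : Commute σ τ :=
  Quotient.sound (ConGen.Rel.of _ _ (Or.inl ⟨rfl, rfl⟩))

lemma sigma_mul_tau : σ * τ = σ ^ 3 := by
  rw [pow_three, ← mul_assoc]
  exact Quotient.sound (ConGen.Rel.of _ _ (Or.inr ⟨rfl, rfl⟩))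

lemma sigma_pow_mul_tau_pow {a : ℕ} (ha : a ≠ 0) (b : ℕ) : σ ^ a * τ ^ b = σ ^ (a + 2 * b) := by
  obtain ⟨a, rfl⟩ := Nat.exists_eq_add_one_of_ne_zero ha
  induction b with
  | zero => simp
  | succ b ih =>
    calc σ ^ (a + 1) * τ ^ (b + 1) = σ ^ (a + 1 + 2 * b) * τ := by rw [pow_succ τ, ← mul_assoc, ih]
      _ = σ ^ (a + 2 * b) * (σ * τ) := by
          rw [show a + 1 + 2 * b = a + 2 * b + 1 by ring, pow_succ, mul_assoc]
      _ = σ ^ (a + 1 + 2 * (b + 1)) := by rw [sigma_mul_tau, ← pow_add]; ring_nf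

lemma exists_eq_sigma_pow_mul_tau_pow (x : SurfMonoid) : ∃ a b : ℕ, x = σ ^ a * τ ^ b := by
  refine PresentedMonoid.inductionOn x fun w => ?_
  induction w using FreeMonoid.inductionOn' with
  | one => exact ⟨0, 0, by rw [pow_zero, pow_zero, one_mul]; rfl⟩
  | of_mul c w ih =>
    obtain ⟨a, b, hab⟩ := ih
    rw [map_mul, hab]
    cases c
    · exact ⟨a + 1, b, by rw [pow_succ', mul_assoc]; rfl⟩
    · refine ⟨a, b + 1, ?_⟩
      change τ * (σ ^ a * τ ^ b) = _
      rw [← mul_assoc, (commute_sigma_tau.pow_left a).symm.eq, mul_assoc, ← pow_succ']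

def genus : SurfMonoid →* Multiplicative ℕ :=
  PresentedMonoid.lift (fun b => if b then Multiplicative.ofAdd 2 else Multiplicative.ofAdd 1)
    (by rintro _ _ (⟨rfl, rfl⟩ | ⟨rfl, rfl⟩) <;> rfl)

lemma genus_sigma_pow (n : ℕ) : genus (σ ^ n) = Multiplicative.ofAdd n := by
  rw [map_pow, show genus σ = Multiplicative.ofAdd 1 from rfl, ← ofAdd_nsmul, smul_eq_mul, mul_one]

lemma genus_tau_pow (m : ℕ) : genus (τ ^ m) = Multiplicative.ofAdd (2 * m) := by
  rw [map_pow, show genus τ = Multiplicative.ofAdd 2 from rfl, ← ofAdd_nsmul, smul_eq_mul,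
    mul_comm]

def orientable : SurfMonoid →* ℕ :=
  PresentedMonoid.lift (fun b => if b then 1 else 0)
    (by rintro _ _ (⟨rfl, rfl⟩ | ⟨rfl, rfl⟩) <;> rfl)

lemma sigma_pow_ne_tau_pow {n : ℕ} (hn : n ≠ 0) (m : ℕ) : σ ^ n ≠ τ ^ m := by
  intro h
  have h' := congrArg orientable h
  rw [map_pow, map_pow, show orientable σ = 0 from rfl, show orientable τ = 1 from rfl, one_pow,
    zero_pow hn] at h'
  exact zero_ne_one h'

lemma eq_sigma_pow_genus_or_exists_eq_tau_pow (x : SurfMonoid) :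
    x = σ ^ (genus x).toAdd ∨ ∃ m, x = τ ^ m := by
  obtain ⟨a, b, rfl⟩ := exists_eq_sigma_pow_mul_tau_pow x
  rcases eq_or_ne a 0 with rfl | ha
  · exact Or.inr ⟨b, one_mul _⟩
  · left
    rw [sigma_pow_mul_tau_pow ha, genus_sigma_pow, toAdd_ofAdd]

lemma genus_eq_ofAdd_iff {n : ℕ} (hn : n ≠ 0) (x : SurfMonoid) :
    genus x = Multiplicative.ofAdd n ↔ x = σ ^ n ∨ (Even n ∧ x = τ ^ (n / 2)) := by
  constructor
  · intro hx
    rcases eq_sigma_pow_genus_or_exists_eq_tau_pow x with hσ | ⟨m, rfl⟩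
    · exact Or.inl (by rwa [hx, toAdd_ofAdd] at hσ)
    · obtain rfl : 2 * m = n := by rw [genus_tau_pow] at hx; exact Multiplicative.ofAdd.injective hx
      exact Or.inr ⟨even_two_mul m, by rw [Nat.mul_div_cancel_left m two_pos]⟩
  · rintro (rfl | ⟨hev, rfl⟩)
    · exact genus_sigma_pow n
    · rw [genus_tau_pow, Nat.two_mul_div_two_of_even hev]

end SurfMonoid

/-- There is a monoid homomorphism `h : M → (ℕ, +)` with `h(σ) = 1`, `h(τ) = 2`, whose
fiber over `n ≥ 1` is `{σ^n, τ^(n/2)}` (two distinct elements) when `n` is even and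
`{σ^n}` when `n` is odd. -/
theorem surf_monoid_grading :
    ∃ h : SurfMonoid →* Multiplicative ℕ,
      h SurfMonoid.σ = Multiplicative.ofAdd 1 ∧
      h SurfMonoid.τ = Multiplicative.ofAdd 2 ∧
      ∀ n : ℕ, 1 ≤ n →
        (Even n →
          {x : SurfMonoid | h x = Multiplicative.ofAdd n} =
            {SurfMonoid.σ ^ n, SurfMonoid.τ ^ (n / 2)} ∧
          SurfMonoid.σ ^ n ≠ SurfMonoid.τ ^ (n / 2)) ∧
        (Odd n →
          {x : SurfMonoid | h x = Multiplicative.ofAdd n} = {SurfMonoid.σ ^ n}) := by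
  open SurfMonoid in
  refine ⟨genus, rfl, rfl, fun n hn => ?_⟩
  have hn : n ≠ 0 := by omega
  refine ⟨fun hev => ⟨?_, sigma_pow_ne_tau_pow hn _⟩, fun hodd => ?_⟩ <;> ext x <;>
    simp only [Set.mem_ofPred_eq, genus_eq_ofAdd_iff hn]
  · simp [hev]
  · simp [Nat.not_even_iff_odd.mpr hodd]
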